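/- arXiv:1108.3663 — 5 statements merged into one kernel-verified Lean document; each statement's English description precedes it below -/
import Mathlib

section
/- (General probe version of the limit used in Proposition 2, for a sharp position measurement.) Let w : ℝ → [0,∞) be a probability density with ∫_ℝ p·w(p) dp = 0 and σ² := ∫_ℝ p²·w(p) dp < ∞. Let ψ ∈ L²(ℝ) satisfy ∫_ℝ x²|ψ(x)|² dx < ∞, and let F be a bounded self-adjoint operator on L²(ℝ) with 0 ≤ F ≤ I. For t ∈ ℝ let (U_t ψ)(y) = e^{−ity} ψ(y) and for λ > 0 set h_λ(p) = ⟨U_{λp} ψ | F U_{λp} ψ⟩. Then lim_{λ→0⁺} (1/λ) ∫_ℝ p · w(p) · h_λ(p) dp = 2 σ² · Im ⟨ψ | F(Qψ)⟩, where (Qψ)(y) = y·ψ(y). (This corresponds to the paper's formula lim_{λ→0} Γ^λ[1] = 2⟨φ|P²φ⟩ · Im⟨F(Y)φ | E[1]φ⟩ with w = |φ̂|², ⟨φ|Pφ⟩ = 0 and σ² = ⟨φ|P²φ⟩.) -/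
open MeasureTheory Complex Filter
open scoped InnerProductSpace ENNReal Topology NNReal

/-!
Write `h t = ⟪U t, F (U t)⟫`. In `L²`, `t ↦ U t` is Lipschitz with derivative `-I • Qψ` at `0`
(dominated convergence), so `h` is Lipschitz and, `F` being symmetric,
`h' 0 = 2 Im ⟪ψ, F Qψ⟫`. As `w` has mean zero, `h 0` may be subtracted under the integral:
`λ⁻¹ ∫ p w(p) h(λp) dp = ∫ p² w(p) · slope h 0 (λp) dp`. The slopes are bounded by the Lipschitz
constant of `h` and tend to `h' 0`, so dominated convergence against `p² w(p)` gives `σ² h' 0`.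
-/

namespace MeasureTheory.Lp

variable {α E : Type*} [MeasurableSpace α] {μ : Measure α} [NormedAddCommGroup E]
  {p : ℝ≥0∞} [Fact (1 ≤ p)]

theorem tendsto_zero_of_dominated {ι : Type*} {l : Filter ι} [l.IsCountablyGenerated]
    (hp : p ≠ ∞) {F : ι → Lp E p μ} {f : ι → α → E} {g : α → ℝ}
    (hF : ∀ i, (F i : α → E) =ᵐ[μ] f i) (hg : MemLp g p μ)
    (h_bound : ∀ᶠ i in l, ∀ᵐ a ∂μ, ‖f i a‖ ≤ g a)
    (h_lim : ∀ᵐ a ∂μ, Tendsto (fun i => f i a) l (𝓝 0)) :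
    Tendsto F l (𝓝 0) := by
  have hp0 : p ≠ 0 := (lt_of_lt_of_le zero_lt_one (Fact.out : 1 ≤ p)).ne'
  have hp_pos : 0 < p.toReal := ENNReal.toReal_pos hp0 hp
  have h_eLpNorm : ∀ i, eLpNorm (⇑(F i) - ⇑(0 : Lp E p μ)) p μ
      = (∫⁻ a, ‖f i a‖ₑ ^ p.toReal ∂μ) ^ (1 / p.toReal) := fun i => by
    rw [← eLpNorm_eq_lintegral_rpow_enorm_toReal hp0 hp]
    refine eLpNorm_congr_ae ?_
    filter_upwards [hF i, Lp.coeFn_zero E p μ] with a hFa h0a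
    rw [Pi.sub_apply, hFa, h0a, Pi.zero_apply, sub_zero]
  rw [tendsto_Lp_iff_tendsto_eLpNorm']
  simp_rw [h_eLpNorm]
  have h_int : Tendsto (fun i => ∫⁻ a, ‖f i a‖ₑ ^ p.toReal ∂μ) l (𝓝 (∫⁻ _, 0 ∂μ)) := by
    refine tendsto_lintegral_filter_of_dominated_convergence' (fun a => ‖g a‖ₑ ^ p.toReal)
      (Eventually.of_forall fun i => ?_) ?_ ?_ ?_
    · exact ((Lp.aestronglyMeasurable (F i)).congr (hF i)).enorm.pow_const _
    · filter_upwards [h_bound] with i hi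
      filter_upwards [hi] with a ha
      gcongr
      exact enorm_le_iff_norm_le.2 (ha.trans (Real.le_norm_self _))
    · exact (lintegral_rpow_enorm_lt_top_of_eLpNorm_lt_top hp0 hp hg.eLpNorm_lt_top).ne
    · filter_upwards [h_lim] with a ha
      simpa [hp_pos] using ha.enorm.ennrpow_const p.toReal
  simpa [hp_pos] using h_int.ennrpow_const (1 / p.toReal)

end MeasureTheory.Lp

theorem norm_cexp_neg_I_mul_sub_cexp_le (t s y : ℝ) :
    ‖cexp (-(I * t * y)) - cexp (-(I * s * y))‖ ≤ |t - s| * |y| := by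
  have h : cexp (-(I * t * y)) - cexp (-(I * s * y))
      = cexp (-(I * s * y)) * (cexp (I * ↑((s - t) * y)) - 1) := by
    rw [mul_sub, ← Complex.exp_add, mul_one]
    congr 2
    push_cast
    ring
  rw [h, norm_mul, Complex.norm_exp, abs_sub_comm, ← abs_mul]
  simpa using Real.norm_exp_I_mul_ofReal_sub_one_le (x := (s - t) * y)

theorem hasDerivAt_cexp_neg_I_mul (y : ℝ) :
    HasDerivAt (fun t : ℝ => cexp (-(I * t * y))) (-(I * y)) 0 := by
  simpa [mul_comm, mul_left_comm, mul_assoc] using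
    (((hasDerivAt_id (0 : ℝ)).ofReal_comp.const_mul (-I)).mul_const (y : ℂ)).cexp

section Modulation

variable {μ : Measure ℝ} {ψ Qψ : Lp ℂ 2 μ} {U : ℝ → Lp ℂ 2 μ}

theorem modulation_zero (hU : ∀ t : ℝ, (U t : ℝ → ℂ) =ᵐ[μ] fun y => cexp (-(I * t * y)) * ψ y) :
    U 0 = ψ := by
  ext1
  filter_upwards [hU 0] with y hy
  simp [hy]

theorem norm_modulation (hU : ∀ t : ℝ, (U t : ℝ → ℂ) =ᵐ[μ] fun y => cexp (-(I * t * y)) * ψ y)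
    (t : ℝ) : ‖U t‖ = ‖ψ‖ := by
  rw [Lp.norm_def, Lp.norm_def, eLpNorm_congr_ae (hU t)]
  congr 1
  refine eLpNorm_congr_norm_ae (Eventually.of_forall fun y => ?_)
  simp [Complex.norm_exp]

theorem lipschitzWith_modulation
    (hU : ∀ t : ℝ, (U t : ℝ → ℂ) =ᵐ[μ] fun y => cexp (-(I * t * y)) * ψ y)
    (hQψ : (Qψ : ℝ → ℂ) =ᵐ[μ] fun y => (y : ℂ) * ψ y) :
    LipschitzWith ‖Qψ‖₊ U := by
  refine LipschitzWith.of_dist_le_mul fun t s => ?_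
  rw [dist_eq_norm, Real.dist_eq, coe_nnnorm, mul_comm, ← norm_smul_of_nonneg (abs_nonneg _)]
  refine Lp.norm_le_norm_of_ae_le ?_
  filter_upwards [Lp.coeFn_sub (U t) (U s), Lp.coeFn_smul |t - s| Qψ, hU t, hU s, hQψ]
    with y hsub hsmul hUt hUs hy
  rw [hsub, hsmul, Pi.sub_apply, Pi.smul_apply, hUt, hUs, hy, ← sub_mul, norm_mul, norm_smul,
    norm_mul, Real.norm_of_nonneg (abs_nonneg _), Complex.norm_real, Real.norm_eq_abs, ← mul_assoc]
  gcongr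
  exact norm_cexp_neg_I_mul_sub_cexp_le t s y

theorem hasDerivAt_modulation
    (hU : ∀ t : ℝ, (U t : ℝ → ℂ) =ᵐ[μ] fun y => cexp (-(I * t * y)) * ψ y)
    (hQψ : (Qψ : ℝ → ℂ) =ᵐ[μ] fun y => (y : ℂ) * ψ y) :
    HasDerivAt U (-I • Qψ) 0 := by
  rw [hasDerivAt_iff_tendsto_slope_zero, ← tendsto_sub_nhds_zero_iff]
  simp only [zero_add, modulation_zero hU]
  refine Lp.tendsto_zero_of_dominated ENNReal.ofNat_ne_top
    (f := fun t y => (t⁻¹ • (cexp (-(I * t * y)) - 1) + I * y) * ψ y)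
    (fun t => ?_) ((Lp.memLp Qψ).norm.const_mul 2) ?_ ?_
  · filter_upwards [Lp.coeFn_sub (t⁻¹ • (U t - ψ)) (-I • Qψ), Lp.coeFn_smul t⁻¹ (U t - ψ),
      Lp.coeFn_sub (U t) ψ, Lp.coeFn_smul (-I) Qψ, hU t, hQψ] with y h1 h2 h3 h4 hUt hy
    rw [h1, Pi.sub_apply, h2, Pi.smul_apply, h3, Pi.sub_apply, hUt, h4, Pi.smul_apply, hy]
    simp only [Complex.real_smul, smul_eq_mul]
    ring
  · filter_upwards [self_mem_nhdsWithin] with t (ht : t ≠ 0)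
    filter_upwards [hQψ] with y hy
    rw [hy, norm_mul, norm_mul, Complex.norm_real, Real.norm_eq_abs, ← mul_assoc]
    gcongr
    calc ‖t⁻¹ • (cexp (-(I * t * y)) - 1) + I * y‖
        ≤ |t|⁻¹ * (|t| * |y|) + |y| := by
          refine (norm_add_le _ _).trans (add_le_add ?_ (by simp))
          rw [norm_smul, Real.norm_eq_abs, abs_inv]
          gcongr
          simpa using norm_cexp_neg_I_mul_sub_cexp_le t 0 y
      _ = 2 * |y| := by field_simp; ring
  · refine Eventually.of_forall fun y => ?_
    have h := (hasDerivAt_iff_tendsto_slope_zero.1 (hasDerivAt_cexp_neg_I_mul y)).add_const (I * y)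
    simpa using h.mul_const (ψ y)

end Modulation

section QuadraticForm

variable {𝕜 E : Type*} [RCLike 𝕜] [NormedAddCommGroup E] [InnerProductSpace 𝕜 E]

theorem HasDerivAt.inner_map_self [NormedSpace ℝ E] [IsScalarTower ℝ 𝕜 E] (T : E →L[𝕜] E)
    {f : ℝ → E} {f' : E} {x : ℝ} (hf : HasDerivAt f f' x) :
    HasDerivAt (fun t => ⟪f t, T (f t)⟫_𝕜) (⟪f x, T f'⟫_𝕜 + ⟪f', T (f x)⟫_𝕜) x :=
  hf.inner 𝕜 ((T.restrictScalars ℝ).hasFDerivAt.comp_hasDerivAt x hf)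

theorem LipschitzWith.inner_map_self {α : Type*} [PseudoMetricSpace α] (T : E →L[𝕜] E)
    {f : α → E} {K M : ℝ≥0} (hf : LipschitzWith K f) (hM : ∀ a, ‖f a‖ ≤ M) :
    LipschitzWith (2 * ‖T‖₊ * M * K) fun a => ⟪f a, T (f a)⟫_𝕜 := by
  refine LipschitzWith.of_dist_le_mul fun a b => ?_
  have hsplit : ⟪f a, T (f a)⟫_𝕜 - ⟪f b, T (f b)⟫_𝕜
      = ⟪f a - f b, T (f a)⟫_𝕜 + ⟪f b, T (f a - f b)⟫_𝕜 := by
    rw [inner_sub_left, map_sub, inner_sub_right]; ring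
  have hd : ‖f a - f b‖ ≤ K * dist a b := by rw [← dist_eq_norm]; exact hf.dist_le_mul a b
  rw [dist_eq_norm, hsplit]
  calc ‖⟪f a - f b, T (f a)⟫_𝕜 + ⟪f b, T (f a - f b)⟫_𝕜‖
      ≤ ‖f a - f b‖ * (‖T‖ * ‖f a‖) + ‖f b‖ * (‖T‖ * ‖f a - f b‖) := by
        refine (norm_add_le _ _).trans (add_le_add ?_ ?_) <;>
          refine (norm_inner_le_norm _ _).trans ?_ <;> gcongr <;> exact T.le_opNorm _
    _ ≤ K * dist a b * (‖T‖ * M) + M * (‖T‖ * (K * dist a b)) := by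
        gcongr
        exacts [hM a, hM b]
    _ = (2 * ‖T‖₊ * M * K : ℝ≥0) * dist a b := by push_cast; ring

end QuadraticForm

theorem LinearMap.IsSymmetric.inner_map_neg_I_smul_add {E : Type*} [NormedAddCommGroup E]
    [InnerProductSpace ℂ E] {T : E →ₗ[ℂ] E} (hT : T.IsSymmetric) (x v : E) :
    ⟪x, T (-I • v)⟫_ℂ + ⟪-I • v, T x⟫_ℂ = 2 * (⟪x, T v⟫_ℂ).im := by
  rw [map_smul, inner_smul_left, inner_smul_right, ← hT, ← inner_conj_symm v]
  generalize ⟪T x, v⟫_ℂ = z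
  apply Complex.ext <;> simp
  ring

theorem LipschitzWith.norm_slope_le {E : Type*} [NormedAddCommGroup E] [NormedSpace ℝ E]
    {h : ℝ → E} {K : ℝ≥0} (hh : LipschitzWith K h) (a t : ℝ) : ‖slope h a t‖ ≤ K := by
  rcases eq_or_ne t a with rfl | hta
  · simp
  rw [slope_def_module, norm_smul, norm_inv, ← dist_eq_norm, ← dist_eq_norm,
    inv_mul_le_iff₀ (dist_pos.2 hta), dist_comm t, dist_comm (h t), mul_comm]
  exact hh.dist_le_mul a t

theorem Measurable.slope {E : Type*} [NormedAddCommGroup E] [NormedSpace ℝ E]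
    [MeasurableSpace E] [BorelSpace E] {h : ℝ → E} (hh : Measurable h) (a : ℝ) :
    Measurable (slope h a) := by
  simp only [slope_fun_def]
  fun_prop

theorem integrable_id_mul_of_integrable_sq_mul {μ : Measure ℝ} {w : ℝ → ℝ}
    (hw : Integrable w μ) (hw2 : Integrable (fun p => p ^ 2 * w p) μ) :
    Integrable (fun p => p * w p) μ := by
  refine (hw.norm.add hw2.norm).mono' (aestronglyMeasurable_id.mul hw.aestronglyMeasurable)
    (Eventually.of_forall fun p => ?_)
  have hp : |p| ≤ 1 + p ^ 2 := by nlinarith [sq_nonneg (|p| - 1), sq_abs p]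
  simp only [Pi.add_apply, norm_mul, norm_pow, Real.norm_eq_abs, sq_abs]
  nlinarith [abs_nonneg (w p)]

section FirstMoment

variable {μ : Measure ℝ} {w : ℝ → ℝ} {h : ℝ → ℂ} {K : ℝ≥0} {D : ℂ}

theorem integrable_sq_mul_slope_comp_mul (hw2 : Integrable (fun p => p ^ 2 * w p) μ)
    (hh : LipschitzWith K h) (l : ℝ) :
    Integrable (fun p => ((p ^ 2 * w p : ℝ) : ℂ) * slope h 0 (l * p)) μ :=
  hw2.ofReal.mul_bdd ((hh.continuous.measurable.slope 0).comp
    (measurable_const_mul l)).aestronglyMeasurable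
    (Eventually.of_forall fun _ => hh.norm_slope_le 0 _)

theorem tendsto_integral_sq_mul_slope_comp_mul (hw2 : Integrable (fun p => p ^ 2 * w p) μ)
    (hh : LipschitzWith K h) (hD : HasDerivAt h D 0) :
    Tendsto (fun l : ℝ => ∫ p, ((p ^ 2 * w p : ℝ) : ℂ) * slope h 0 (l * p) ∂μ) (𝓝[≠] 0)
      (𝓝 ((∫ p, p ^ 2 * w p ∂μ : ℝ) * D)) := by
  rw [← integral_complex_ofReal, ← integral_mul_const]
  refine tendsto_integral_filter_of_dominated_convergence (fun p => K * ‖p ^ 2 * w p‖)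
    (Eventually.of_forall fun l => (integrable_sq_mul_slope_comp_mul hw2 hh l).1)
    (Eventually.of_forall fun _ => Eventually.of_forall fun p => ?_)
    (hw2.norm.const_mul K) (Eventually.of_forall fun p => ?_)
  · rw [norm_mul, Complex.norm_real, mul_comm]
    gcongr
    exact hh.norm_slope_le 0 _
  · rcases eq_or_ne p 0 with rfl | hp
    · simp
    refine tendsto_const_nhds.mul ((hasDerivAt_iff_tendsto_slope.1 hD).comp ?_)
    refine tendsto_nhdsWithin_of_tendsto_nhds_of_eventually_within _ ?_ ?_
    · exact ((continuous_mul_const p).tendsto' 0 0 (zero_mul p)).mono_left nhdsWithin_le_nhds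
    · filter_upwards [self_mem_nhdsWithin] with l hl
      exact mul_ne_zero hl hp

theorem tendsto_inv_mul_integral_id_mul_comp_mul (hw1 : Integrable (fun p => p * w p) μ)
    (hw2 : Integrable (fun p => p ^ 2 * w p) μ) (hmean : ∫ p, p * w p ∂μ = 0)
    (hh : LipschitzWith K h) (hD : HasDerivAt h D 0) :
    Tendsto (fun l : ℝ => (1 / (l : ℂ)) * ∫ p, (p : ℂ) * (w p : ℂ) * h (l * p) ∂μ) (𝓝[≠] 0)
      (𝓝 ((∫ p, p ^ 2 * w p ∂μ : ℝ) * D)) := by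
  refine (tendsto_integral_sq_mul_slope_comp_mul hw2 hh hD).congr' ?_
  filter_upwards [self_mem_nhdsWithin] with l (hl : l ≠ 0)
  have h_split : ∀ p : ℝ, (p : ℂ) * (w p : ℂ) * h (l * p)
      = h 0 * ((p * w p : ℝ) : ℂ) + l * (((p ^ 2 * w p : ℝ) : ℂ) * slope h 0 (l * p)) := by
    intro p
    rcases eq_or_ne p 0 with rfl | hp
    · simp
    have hlC : (l : ℂ) ≠ 0 := ofReal_ne_zero.2 hl
    have hpC : (p : ℂ) ≠ 0 := ofReal_ne_zero.2 hp
    rw [slope_def_module, Complex.real_smul]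
    push_cast
    field_simp
    ring
  simp_rw [h_split]
  rw [integral_add, integral_const_mul, integral_const_mul, integral_complex_ofReal, hmean,
    ofReal_zero, mul_zero, zero_add, ← mul_assoc, one_div, inv_mul_cancel₀ (ofReal_ne_zero.2 hl),
    one_mul]
  · exact hw1.ofReal.const_mul _
  · exact (integrable_sq_mul_slope_comp_mul hw2 hh l).const_mul _

end FirstMoment

theorem weak_limit_of_momentum_pointer_first_moment_general
    (w : ℝ → ℝ)
    (hwint : Integrable w volume)
    (hwmean : ∫ p : ℝ, p * w p = 0)
    (hwsq : Integrable (fun p : ℝ => p ^ 2 * w p) volume)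
    (ψ Qψ : Lp ℂ 2 (volume : Measure ℝ))
    (hQψ : (Qψ : ℝ → ℂ) =ᵐ[volume] fun y => (y : ℂ) * (ψ : ℝ → ℂ) y)
    (F : Lp ℂ 2 (volume : Measure ℝ) →L[ℂ] Lp ℂ 2 (volume : Measure ℝ))
    (hF : F.IsPositive)
    (U : ℝ → Lp ℂ 2 (volume : Measure ℝ))
    (hU : ∀ t : ℝ, (U t : ℝ → ℂ) =ᵐ[volume]
      fun y => Complex.exp (-(Complex.I * (t : ℂ) * (y : ℂ))) * (ψ : ℝ → ℂ) y) :
    Tendsto (fun l : ℝ =>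
        (1 / (l : ℂ)) * ∫ p : ℝ, (p : ℂ) * (w p : ℂ) * ⟪U (l * p), F (U (l * p))⟫_ℂ)
      (nhdsWithin 0 (Set.Ioi 0))
      (nhds ((2 * (∫ p : ℝ, p ^ 2 * w p) * Complex.im ⟪ψ, F Qψ⟫_ℂ : ℝ) : ℂ)) := by
  have h_deriv : HasDerivAt (fun t => ⟪U t, F (U t)⟫_ℂ) (2 * (⟪ψ, F Qψ⟫_ℂ).im) 0 := by
    have h := (hasDerivAt_modulation hU hQψ).inner_map_self F
    rwa [modulation_zero hU, ← F.coe_coe, hF.isSymmetric.inner_map_neg_I_smul_add] at h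
  have h_lip := (lipschitzWith_modulation hU hQψ).inner_map_self F (M := ‖ψ‖₊)
    fun t => (norm_modulation hU t).le
  have h_lim := tendsto_inv_mul_integral_id_mul_comp_mul
    (integrable_id_mul_of_integrable_sq_mul hwint hwsq) hwsq hwmean h_lip h_deriv
  have h_target : ((2 * (∫ p : ℝ, p ^ 2 * w p) * (⟪ψ, F Qψ⟫_ℂ).im : ℝ) : ℂ)
      = (∫ p : ℝ, p ^ 2 * w p : ℝ) * (2 * (⟪ψ, F Qψ⟫_ℂ).im) := by
    simp only [ofReal_mul, ofReal_ofNat]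
    ring
  rw [h_target]
  exact h_lim.mono_left (nhdsWithin_mono 0 fun l (hl : 0 < l) => hl.ne')

/-- The limit used in Proposition 2 for a sharp position measurement and a general probe
momentum density `w` with zero mean and second moment `σ²`:
`lim_{λ→0⁺} (1/λ) ∫ p·w(p)·⟨U_{λp}ψ | F U_{λp}ψ⟩ dp = 2σ²·Im ⟨ψ | F(Qψ)⟩`. -/
theorem weak_limit_of_momentum_pointer_first_moment
    (w : ℝ → ℝ) (hw0 : ∀ p, 0 ≤ w p)
    (hwint : Integrable w volume) (hwprob : ∫ p : ℝ, w p = 1)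
    (hwmean : ∫ p : ℝ, p * w p = 0)
    (hwsq : Integrable (fun p : ℝ => p ^ 2 * w p) volume)
    (ψ Qψ : Lp ℂ 2 (volume : Measure ℝ))
    (hQψ : (Qψ : ℝ → ℂ) =ᵐ[volume] fun y => (y : ℂ) * (ψ : ℝ → ℂ) y)
    (F : Lp ℂ 2 (volume : Measure ℝ) →L[ℂ] Lp ℂ 2 (volume : Measure ℝ))
    (hF : F.IsPositive) (hF' : (1 - F).IsPositive)
    (U : ℝ → Lp ℂ 2 (volume : Measure ℝ))
    (hU : ∀ t : ℝ, (U t : ℝ → ℂ) =ᵐ[volume]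
      fun y => Complex.exp (-(Complex.I * (t : ℂ) * (y : ℂ))) * (ψ : ℝ → ℂ) y) :
    Tendsto (fun l : ℝ =>
        (1 / (l : ℂ)) * ∫ p : ℝ, (p : ℂ) * (w p : ℂ) * ⟪U (l * p), F (U (l * p))⟫_ℂ)
      (nhdsWithin 0 (Set.Ioi 0))
      (nhds ((2 * (∫ p : ℝ, p ^ 2 * w p) * Complex.im ⟪ψ, F Qψ⟫_ℂ : ℝ) : ℂ)) :=
  weak_limit_of_momentum_pointer_first_moment_general w hwint hwmean hwsq ψ Qψ hQψ F hF U hU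
end

section
/- (Weak limit of the Lundeen σ_x channel.) Let φ ∈ L²(ℝ) be a unit vector, let I ⊆ ℝ be a bounded interval and Q the orthogonal projection on L²(ℝ) given by multiplication by the indicator of I. For ε > 0 let F_ε = 𝓕* ∘ M_ε ∘ 𝓕 be the spectral projection of momentum onto J_ε = (−ε/2, ε/2), where 𝓕 is the Fourier–Plancherel unitary on L²(ℝ) and M_ε is multiplication by the indicator of J_ε; assume ⟨φ | F_ε φ⟩ ≠ 0. For α ∈ (0, π/2) define Ψ^α = (c₀^α, c₁^α) ∈ L²(ℝ) ⊕ L²(ℝ) with c₀^α = (φ − Qφ) + (cos α)·Qφ and c₁^α = (sin α)·Qφ. Then lim_{α→0⁺} [ ⟨c₀^α | F_ε c₁^α⟩ + ⟨c₁^α | F_ε c₀^α⟩ ] / [ 2 sin α · ( ⟨c₀^α | F_ε c₀^α⟩ + ⟨c₁^α | F_ε c₁^α⟩ ) ] = Re( ⟨φ | F_ε (Qφ)⟩ / ⟨φ | F_ε φ⟩ ). (The numerator is ⟨Ψ^α | (F_ε ⊗ σ_x) Ψ^α⟩, i.e. the difference of the two post-selected probabilities when the pointer σ_x is read out, and the denominator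 contains the total post-selection probability ⟨Ψ^α | (F_ε ⊗ I) Ψ^α⟩; thus the conditional σ_x-average scaled by 1/(2 sin α) converges, as the coupling α → 0, to the real part ξ of ⟨φ | F_ε Q φ⟩ / ⟨φ | F_ε φ⟩, as claimed for the Lundeen et al. scheme.) -/
/-!
`F_ε` is the conjugate of a multiplication by an indicator by the unitary `𝓕`, hence a symmetric
operator. After cancelling the common factor `sin α`, numerator and denominator are continuous
in `α`; at `α = 0` the numerator becomes `⟪φ, F_ε Qφ⟫ + ⟪Qφ, F_ε φ⟫ = 2 Re ⟪φ, F_ε Qφ⟫` and the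
denominator `2 ⟪φ, F_ε φ⟫`, which is real by symmetry.
-/

open MeasureTheory Complex Filter
open scoped InnerProductSpace

theorem LinearMap.isSymmetric_of_coeFn_ae_eq_indicator {X 𝕜 : Type*} [MeasurableSpace X]
    {μ : Measure X} [RCLike 𝕜] {s : Set X} (M : Lp 𝕜 2 μ →ₗ[𝕜] Lp 𝕜 2 μ)
    (hM : ∀ f, (M f : X → 𝕜) =ᵐ[μ] s.indicator f) : M.IsSymmetric := by
  intro f g
  rw [L2.inner_def, L2.inner_def]
  refine integral_congr_ae ?_
  filter_upwards [hM f, hM g] with x hf hg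
  simp only [hf, hg, RCLike.inner_apply, Set.indicator]
  split_ifs <;> simp

theorem eventually_sin_ne_zero_nhdsNE : ∀ᶠ α : ℝ in nhdsWithin 0 {0}ᶜ, Real.sin α ≠ 0 := by
  have hball : Set.Ioo (-Real.pi) Real.pi ∈ nhds (0 : ℝ) :=
    Ioo_mem_nhds (neg_neg_of_pos Real.pi_pos) Real.pi_pos
  filter_upwards [nhdsWithin_le_nhds hball, self_mem_nhdsWithin] with α hα hα0
  exact fun h => hα0 ((Real.sin_eq_zero_iff_of_lt_of_lt hα.1 hα.2).1 h)

section

variable {E : Type*} [NormedAddCommGroup E] [InnerProductSpace ℂ E]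

theorem LinearMap.IsSymmetric.inner_add_inner_div_eq_re {T : E →ₗ[ℂ] E} (hT : T.IsSymmetric)
    (φ q : E) :
    (⟪φ, T q⟫_ℂ + ⟪q, T φ⟫_ℂ) / (2 * ⟪φ, T φ⟫_ℂ) = ((re (⟪φ, T q⟫_ℂ / ⟪φ, T φ⟫_ℂ) : ℝ) : ℂ) := by
  have hw : ((re ⟪φ, T φ⟫_ℂ : ℝ) : ℂ) = ⟪φ, T φ⟫_ℂ :=
    conj_eq_iff_re.1 ((inner_conj_symm _ _).trans (hT φ φ))
  rw [← hw, div_ofReal_re, ← hT q φ, ← inner_conj_symm (T q) φ, add_conj]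
  push_cast
  rw [mul_div_mul_left _ _ two_ne_zero]

theorem tendsto_lundeen_ratio_of_isSymmetric {T : E →ₗ[ℂ] E} (hT : T.IsSymmetric) (φ q : E)
    (hne : ⟪φ, T φ⟫_ℂ ≠ 0) :
    Tendsto (fun α : ℝ =>
        (⟪φ - q + (Real.cos α : ℂ) • q, T ((Real.sin α : ℂ) • q)⟫_ℂ +
         ⟪(Real.sin α : ℂ) • q, T (φ - q + (Real.cos α : ℂ) • q)⟫_ℂ) /
        (((2 * Real.sin α : ℝ) : ℂ) *
          (⟪φ - q + (Real.cos α : ℂ) • q, T (φ - q + (Real.cos α : ℂ) • q)⟫_ℂ +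
           ⟪(Real.sin α : ℂ) • q, T ((Real.sin α : ℂ) • q)⟫_ℂ)))
      (nhdsWithin 0 {0}ᶜ) (nhds ((re (⟪φ, T q⟫_ℂ / ⟪φ, T φ⟫_ℂ) : ℝ) : ℂ)) := by
  set c₀ : ℝ → E := fun α => φ - q + (Real.cos α : ℂ) • q
  set N : ℝ → ℂ := fun α => ⟪c₀ α, T q⟫_ℂ + ⟪q, T (c₀ α)⟫_ℂ
  set D : ℝ → ℂ := fun α => ⟪c₀ α, T (c₀ α)⟫_ℂ + (Real.sin α : ℂ) ^ 2 * ⟪q, T q⟫_ℂ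
  have hTc₀ : ∀ α, T (c₀ α) = T φ - T q + (Real.cos α : ℂ) • T q := fun α => by
    simp only [c₀, map_add, map_sub, map_smul]
  have hN : Continuous N := by
    simp only [N, hTc₀, c₀]
    fun_prop
  have hD : Continuous D := by
    simp only [D, hTc₀, c₀]
    fun_prop
  have hN₀ : N 0 = ⟪φ, T q⟫_ℂ + ⟪q, T φ⟫_ℂ := by simp [N, c₀]
  have hD₀ : D 0 = ⟪φ, T φ⟫_ℂ := by simp [D, c₀]
  have hlim : Tendsto (fun α => N α / (2 * D α)) (nhds 0) (nhds (N 0 / (2 * D 0))) :=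
    (hN.tendsto 0).div ((continuous_const.mul hD).tendsto 0)
      (by rw [hD₀]; exact mul_ne_zero two_ne_zero hne)
  rw [← hT.inner_add_inner_div_eq_re, ← hN₀, ← hD₀]
  refine (hlim.mono_left nhdsWithin_le_nhds).congr' ?_
  filter_upwards [eventually_sin_ne_zero_nhdsNE] with α hs
  have hnum : ⟪c₀ α, T ((Real.sin α : ℂ) • q)⟫_ℂ + ⟪(Real.sin α : ℂ) • q, T (c₀ α)⟫_ℂ
      = (Real.sin α : ℂ) * N α := by
    simp only [N, map_smul, inner_smul_left, inner_smul_right, conj_ofReal, mul_add]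
  have hden : ((2 * Real.sin α : ℝ) : ℂ) *
        (⟪c₀ α, T (c₀ α)⟫_ℂ + ⟪(Real.sin α : ℂ) • q, T ((Real.sin α : ℂ) • q)⟫_ℂ)
      = (Real.sin α : ℂ) * (2 * D α) := by
    simp only [D, map_smul, inner_smul_left, inner_smul_right, conj_ofReal, ofReal_mul,
      ofReal_ofNat]
    ring
  rw [hnum, hden, mul_div_mul_left _ _ (ofReal_ne_zero.2 hs)]

end

theorem lundeen_sigma_x_weak_limit_general
    (φ : Lp ℂ 2 (volume : Measure ℝ))
    (Q : Lp ℂ 2 (volume : Measure ℝ) →L[ℂ] Lp ℂ 2 (volume : Measure ℝ))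
    (𝓕 : Lp ℂ 2 (volume : Measure ℝ) ≃ₗᵢ[ℂ] Lp ℂ 2 (volume : Measure ℝ))
    (ε : ℝ)
    (Mε : Lp ℂ 2 (volume : Measure ℝ) →L[ℂ] Lp ℂ 2 (volume : Measure ℝ))
    (hMε : ∀ f : Lp ℂ 2 (volume : Measure ℝ),
      (Mε f : ℝ → ℂ) =ᵐ[volume] Set.indicator (Set.Ioo (-(ε / 2)) (ε / 2)) (f : ℝ → ℂ))
    (Fε : Lp ℂ 2 (volume : Measure ℝ) →L[ℂ] Lp ℂ 2 (volume : Measure ℝ))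
    (hFε : ∀ f : Lp ℂ 2 (volume : Measure ℝ), Fε f = 𝓕.symm (Mε (𝓕 f)))
    (hne : ⟪φ, Fε φ⟫_ℂ ≠ 0) :
    Tendsto (fun α : ℝ =>
        (⟪φ - Q φ + (Real.cos α : ℂ) • Q φ, Fε ((Real.sin α : ℂ) • Q φ)⟫_ℂ +
         ⟪(Real.sin α : ℂ) • Q φ, Fε (φ - Q φ + (Real.cos α : ℂ) • Q φ)⟫_ℂ) /
        (((2 * Real.sin α : ℝ) : ℂ) *
          (⟪φ - Q φ + (Real.cos α : ℂ) • Q φ, Fε (φ - Q φ + (Real.cos α : ℂ) • Q φ)⟫_ℂ +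
           ⟪(Real.sin α : ℂ) • Q φ, Fε ((Real.sin α : ℂ) • Q φ)⟫_ℂ)))
      (nhdsWithin 0 (Set.Ioo 0 (Real.pi / 2)))
      (nhds ((Complex.re (⟪φ, Fε (Q φ)⟫_ℂ / ⟪φ, Fε φ⟫_ℂ) : ℝ) : ℂ)) := by
  have hFε_symm : Fε.toLinearMap.IsSymmetric := by
    have hconj : Fε.toLinearMap =
        𝓕.symm.toLinearMap ∘ₗ Mε.toLinearMap ∘ₗ 𝓕.symm.symm.toLinearMap :=
      LinearMap.ext hFε
    rw [hconj, LinearMap.isSymmetric_linearIsometryEquiv_conj_iff]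
    exact LinearMap.isSymmetric_of_coeFn_ae_eq_indicator Mε.toLinearMap fun f => hMε f
  exact (tendsto_lundeen_ratio_of_isSymmetric hFε_symm φ (Q φ) hne).mono_left
    (nhdsWithin_mono _ fun α hα => hα.1.ne')

/-- Weak limit of the Lundeen `σ_x` channel: with `Ψ^α = (c₀^α, c₁^α)` the state after the
coupling `e^{−iαQ⊗σ_y}` applied to `φ ⊗ |0⟩`, the conditional `σ_x`-average scaled by
`1/(2 sin α)` converges, as `α → 0⁺`, to `Re(⟨φ|F_ε Qφ⟩/⟨φ|F_εφ⟩)`, where `F_ε` is the spectral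
projection of momentum onto `J_ε = (−ε/2, ε/2)`. -/
theorem lundeen_sigma_x_weak_limit
    (φ : Lp ℂ 2 (volume : Measure ℝ)) (hφ : ‖φ‖ = 1)
    (a b : ℝ)
    (Q : Lp ℂ 2 (volume : Measure ℝ) →L[ℂ] Lp ℂ 2 (volume : Measure ℝ))
    (hQ : ∀ f : Lp ℂ 2 (volume : Measure ℝ),
      (Q f : ℝ → ℂ) =ᵐ[volume] Set.indicator (Set.Ioo a b) (f : ℝ → ℂ))
    (𝓕 : Lp ℂ 2 (volume : Measure ℝ) ≃ₗᵢ[ℂ] Lp ℂ 2 (volume : Measure ℝ))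
    (h𝓕 : ∀ f : Lp ℂ 2 (volume : Measure ℝ), Integrable (f : ℝ → ℂ) volume →
      (𝓕 f : ℝ → ℂ) =ᵐ[volume] fun p : ℝ =>
        ((1 / Real.sqrt (2 * Real.pi) : ℝ) : ℂ) *
          ∫ x : ℝ, (f : ℝ → ℂ) x * Complex.exp (-(Complex.I * (p : ℂ) * (x : ℂ))))
    (ε : ℝ) (hε : 0 < ε)
    (Mε : Lp ℂ 2 (volume : Measure ℝ) →L[ℂ] Lp ℂ 2 (volume : Measure ℝ))
    (hMε : ∀ f : Lp ℂ 2 (volume : Measure ℝ),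
      (Mε f : ℝ → ℂ) =ᵐ[volume] Set.indicator (Set.Ioo (-(ε / 2)) (ε / 2)) (f : ℝ → ℂ))
    (Fε : Lp ℂ 2 (volume : Measure ℝ) →L[ℂ] Lp ℂ 2 (volume : Measure ℝ))
    (hFε : ∀ f : Lp ℂ 2 (volume : Measure ℝ), Fε f = 𝓕.symm (Mε (𝓕 f)))
    (hne : ⟪φ, Fε φ⟫_ℂ ≠ 0) :
    Tendsto (fun α : ℝ =>
        (⟪φ - Q φ + (Real.cos α : ℂ) • Q φ, Fε ((Real.sin α : ℂ) • Q φ)⟫_ℂ +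
         ⟪(Real.sin α : ℂ) • Q φ, Fε (φ - Q φ + (Real.cos α : ℂ) • Q φ)⟫_ℂ) /
        (((2 * Real.sin α : ℝ) : ℂ) *
          (⟪φ - Q φ + (Real.cos α : ℂ) • Q φ, Fε (φ - Q φ + (Real.cos α : ℂ) • Q φ)⟫_ℂ +
           ⟪(Real.sin α : ℂ) • Q φ, Fε ((Real.sin α : ℂ) • Q φ)⟫_ℂ)))
      (nhdsWithin 0 (Set.Ioo 0 (Real.pi / 2)))
      (nhds ((Complex.re (⟪φ, Fε (Q φ)⟫_ℂ / ⟪φ, Fε φ⟫_ℂ) : ℝ) : ℂ)) :=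
  lundeen_sigma_x_weak_limit_general φ Q 𝓕 ε Mε hMε Fε hFε hne
end

section
/- (Weak limit of the Lundeen σ_y channel.) Let φ ∈ L²(ℝ) be a unit vector, let I ⊆ ℝ be a bounded interval and Q the orthogonal projection on L²(ℝ) given by multiplication by the indicator of I. For ε > 0 let F_ε = 𝓕* ∘ M_ε ∘ 𝓕 be the spectral projection of momentum onto J_ε = (−ε/2, ε/2), where 𝓕 is the Fourier–Plancherel unitary on L²(ℝ) and M_ε is multiplication by the indicator of J_ε; assume ⟨φ | F_ε φ⟩ ≠ 0. For α ∈ (0, π/2) define Ψ^α = (c₀^α, c₁^α) ∈ L²(ℝ) ⊕ L²(ℝ) with c₀^α = (φ − Qφ) + (cos α)·Qφ and c₁^α = (sin α)·Qφ. Then lim_{α→0⁺} [ −i⟨c₀^α | F_ε c₁^α⟩ + i⟨c₁^α | F_ε c₀^α⟩ ] / [ 2 sin α · ( ⟨c₀^α | F_ε c₀^α⟩ + ⟨c₁^α | F_ε c₁^α⟩ ) ] = Im( ⟨φ | F_ε (Qφ)⟩ / ⟨φ | F_ε φ⟩ ). (The numerator is ⟨Ψ^α | (F_ε ⊗ σ_y)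 Ψ^α⟩; thus the conditional σ_y-average scaled by 1/(2 sin α) converges, as the coupling α → 0, to the imaginary part η of ⟨φ | F_ε Q φ⟩ / ⟨φ | F_ε φ⟩, as claimed for the Lundeen et al. scheme.) -/
/-!
`F_ε = 𝓕⁻¹ M_ε 𝓕` is self-adjoint, being a unitary conjugate of multiplication by an indicator.
Hence, with `u_α = φ - Qφ + cos α • Qφ`, the numerator equals `2 sin α · Im ⟪u_α, F_ε Qφ⟫`, and
after cancelling `2 sin α` the quotient is `Im ⟪u_α, F_ε Qφ⟫ / (⟪u_α, F_ε u_α⟫ + sin² α ⟪Qφ, F_ε Qφ⟫)`,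
which is continuous at `α = 0` where `u_0 = φ`. Its value there is `Im ⟪φ, F_ε Qφ⟫ / ⟪φ, F_ε φ⟫`,
and this is `Im (⟪φ, F_ε Qφ⟫ / ⟪φ, F_ε φ⟫)` because `⟪φ, F_ε φ⟫` is real.
-/

open MeasureTheory Complex Filter
open scoped InnerProductSpace

theorem MeasureTheory.Lp.isSelfAdjoint_of_ae_eq_indicator {α 𝕜 : Type*} [MeasurableSpace α]
    {μ : Measure α} [RCLike 𝕜] {s : Set α} {M : Lp 𝕜 2 μ →L[𝕜] Lp 𝕜 2 μ}
    (hM : ∀ f, M f =ᵐ[μ] s.indicator f) : IsSelfAdjoint M := by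
  refine ContinuousLinearMap.isSelfAdjoint_iff_isSymmetric.mpr fun u v => ?_
  change ⟪M u, v⟫_𝕜 = ⟪u, M v⟫_𝕜
  rw [L2.inner_def, L2.inner_def]
  refine integral_congr_ae ?_
  filter_upwards [hM u, hM v] with x hu hv
  rw [hu, hv]
  by_cases hx : x ∈ s <;> simp [hx]

namespace IsSelfAdjoint

variable {E : Type*} [NormedAddCommGroup E] [InnerProductSpace ℂ E] [CompleteSpace E]
  {T : E →L[ℂ] E}

theorem neg_I_mul_inner_add_I_mul_inner (hT : IsSelfAdjoint T) (x y : E) :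
    -I * ⟪x, T y⟫_ℂ + I * ⟪y, T x⟫_ℂ = 2 * ((⟪x, T y⟫_ℂ).im : ℂ) := by
  have hswap : ⟪y, T x⟫_ℂ = starRingEnd ℂ ⟪x, T y⟫_ℂ := by
    rw [inner_conj_symm, hT.isSymmetric.apply_clm]
  rw [hswap]
  generalize ⟪x, T y⟫_ℂ = z
  apply Complex.ext <;> simp; ring

/-- For `Ψ = (u, s • q)`, the left side is `⟪Ψ, (T ⊗ σ_y) Ψ⟫ / (2 s ⟪Ψ, (T ⊗ 1) Ψ⟫)`. -/
theorem sigmaY_div_eq (hT : IsSelfAdjoint T) (u q : E) {s : ℝ} (hs : s ≠ 0) :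
    (-I * ⟪u, T ((s : ℂ) • q)⟫_ℂ + I * ⟪(s : ℂ) • q, T u⟫_ℂ) /
        (((2 * s : ℝ) : ℂ) * (⟪u, T u⟫_ℂ + ⟪(s : ℂ) • q, T ((s : ℂ) • q)⟫_ℂ)) =
      ((⟪u, T q⟫_ℂ).im : ℂ) / (⟪u, T u⟫_ℂ + (s : ℂ) ^ 2 * ⟪q, T q⟫_ℂ) := by
  have hs' : (s : ℂ) ≠ 0 := ofReal_ne_zero.mpr hs
  simp only [map_smul, inner_smul_left, inner_smul_right, conj_ofReal]
  rw [mul_left_comm, mul_left_comm I, ← mul_add, hT.neg_I_mul_inner_add_I_mul_inner]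
  push_cast
  rw [show (2 * s : ℂ) * (⟪u, T u⟫_ℂ + s * (s * ⟪q, T q⟫_ℂ)) =
    (s * 2) * (⟪u, T u⟫_ℂ + s ^ 2 * ⟪q, T q⟫_ℂ) by ring, mul_assoc,
    mul_div_mul_left _ _ hs', mul_div_mul_left _ _ two_ne_zero]

theorem tendsto_sigmaY_div {ι : Type*} {l : Filter ι} (hT : IsSelfAdjoint T) {φ q : E}
    {u : ι → E} {s : ι → ℝ} (hu : Tendsto u l (nhds φ)) (hs : Tendsto s l (nhds 0))
    (hs0 : ∀ᶠ i in l, s i ≠ 0) (hne : ⟪φ, T φ⟫_ℂ ≠ 0) :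
    Tendsto (fun i => (-I * ⟪u i, T ((s i : ℂ) • q)⟫_ℂ + I * ⟪(s i : ℂ) • q, T (u i)⟫_ℂ) /
        (((2 * s i : ℝ) : ℂ) * (⟪u i, T (u i)⟫_ℂ + ⟪(s i : ℂ) • q, T ((s i : ℂ) • q)⟫_ℂ))) l
      (nhds ((⟪φ, T q⟫_ℂ / ⟪φ, T φ⟫_ℂ).im : ℂ)) := by
  have hcont : ContinuousAt (fun p : E × ℝ =>
      ((⟪p.1, T q⟫_ℂ).im : ℂ) / (⟪p.1, T p.1⟫_ℂ + (p.2 : ℂ) ^ 2 * ⟪q, T q⟫_ℂ)) (φ, 0) := by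
    fun_prop (disch := simpa using hne)
  have hval : ((⟪φ, T q⟫_ℂ).im : ℂ) / (⟪φ, T φ⟫_ℂ + ((0 : ℝ) : ℂ) ^ 2 * ⟪q, T q⟫_ℂ) =
      ((⟪φ, T q⟫_ℂ / ⟪φ, T φ⟫_ℂ).im : ℂ) := by
    have hreal : (((⟪φ, T φ⟫_ℂ).re : ℝ) : ℂ) = ⟪φ, T φ⟫_ℂ :=
      hT.isSymmetric.coe_re_inner_self_apply φ
    rw [← hreal, div_ofReal_im]
    push_cast
    ring
  rw [← hval]
  refine (hcont.tendsto.comp (hu.prodMk_nhds hs)).congr' ?_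
  filter_upwards [hs0] with i hi
  exact (hT.sigmaY_div_eq (u i) q hi).symm

end IsSelfAdjoint

theorem lundeen_sigma_y_weak_limit_general
    (φ : Lp ℂ 2 (volume : Measure ℝ))
    (Q : Lp ℂ 2 (volume : Measure ℝ) →L[ℂ] Lp ℂ 2 (volume : Measure ℝ))
    (𝓕 : Lp ℂ 2 (volume : Measure ℝ) ≃ₗᵢ[ℂ] Lp ℂ 2 (volume : Measure ℝ))
    (ε : ℝ)
    (Mε : Lp ℂ 2 (volume : Measure ℝ) →L[ℂ] Lp ℂ 2 (volume : Measure ℝ))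
    (hMε : ∀ f : Lp ℂ 2 (volume : Measure ℝ),
      (Mε f : ℝ → ℂ) =ᵐ[volume] Set.indicator (Set.Ioo (-(ε / 2)) (ε / 2)) (f : ℝ → ℂ))
    (Fε : Lp ℂ 2 (volume : Measure ℝ) →L[ℂ] Lp ℂ 2 (volume : Measure ℝ))
    (hFε : ∀ f : Lp ℂ 2 (volume : Measure ℝ), Fε f = 𝓕.symm (Mε (𝓕 f)))
    (hne : ⟪φ, Fε φ⟫_ℂ ≠ 0) :
    Tendsto (fun α : ℝ =>
        ((-Complex.I) * ⟪φ - Q φ + (Real.cos α : ℂ) • Q φ, Fε ((Real.sin α : ℂ) • Q φ)⟫_ℂ +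
         Complex.I * ⟪(Real.sin α : ℂ) • Q φ, Fε (φ - Q φ + (Real.cos α : ℂ) • Q φ)⟫_ℂ) /
        (((2 * Real.sin α : ℝ) : ℂ) *
          (⟪φ - Q φ + (Real.cos α : ℂ) • Q φ, Fε (φ - Q φ + (Real.cos α : ℂ) • Q φ)⟫_ℂ +
           ⟪(Real.sin α : ℂ) • Q φ, Fε ((Real.sin α : ℂ) • Q φ)⟫_ℂ)))
      (nhdsWithin 0 (Set.Ioo 0 (Real.pi / 2)))
      (nhds ((Complex.im (⟪φ, Fε (Q φ)⟫_ℂ / ⟪φ, Fε φ⟫_ℂ) : ℝ) : ℂ)) := by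
  have hFε_eq :
      Fε = (𝓕 : Lp ℂ 2 (volume : Measure ℝ) →L[ℂ] Lp ℂ 2 volume).adjoint ∘L Mε ∘L 𝓕 := by
    ext1 f
    simp [hFε]
  have hFε_sa : IsSelfAdjoint Fε :=
    hFε_eq ▸ (Lp.isSelfAdjoint_of_ae_eq_indicator hMε).adjoint_conj _
  have hu : Tendsto (fun α : ℝ => φ - Q φ + (Real.cos α : ℂ) • Q φ) (nhds 0) (nhds φ) :=
    (by fun_prop : Continuous fun α : ℝ => φ - Q φ + (Real.cos α : ℂ) • Q φ).tendsto' 0 φ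
      (by simp)
  have hsin : Tendsto Real.sin (nhds 0) (nhds 0) := Real.continuous_sin.tendsto' 0 0 Real.sin_zero
  have hsin_ne : ∀ᶠ α in nhdsWithin 0 (Set.Ioo 0 (Real.pi / 2)), Real.sin α ≠ 0 := by
    filter_upwards [self_mem_nhdsWithin] with α hα
    exact (Real.sin_pos_of_pos_of_lt_pi hα.1 (hα.2.trans (half_lt_self Real.pi_pos))).ne'
  exact hFε_sa.tendsto_sigmaY_div (hu.mono_left nhdsWithin_le_nhds)
    (hsin.mono_left nhdsWithin_le_nhds) hsin_ne hne

/-- Weak limit of the Lundeen `σ_y` channel: with `Ψ^α = (c₀^α, c₁^α)` the state after the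
coupling `e^{−iαQ⊗σ_y}` applied to `φ ⊗ |0⟩`, the conditional `σ_y`-average scaled by
`1/(2 sin α)` converges, as `α → 0⁺`, to `Im(⟨φ|F_ε Qφ⟩/⟨φ|F_εφ⟩)`, where `F_ε` is the spectral
projection of momentum onto `J_ε = (−ε/2, ε/2)`. -/
theorem lundeen_sigma_y_weak_limit
    (φ : Lp ℂ 2 (volume : Measure ℝ)) (hφ : ‖φ‖ = 1)
    (a b : ℝ)
    (Q : Lp ℂ 2 (volume : Measure ℝ) →L[ℂ] Lp ℂ 2 (volume : Measure ℝ))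
    (hQ : ∀ f : Lp ℂ 2 (volume : Measure ℝ),
      (Q f : ℝ → ℂ) =ᵐ[volume] Set.indicator (Set.Ioo a b) (f : ℝ → ℂ))
    (𝓕 : Lp ℂ 2 (volume : Measure ℝ) ≃ₗᵢ[ℂ] Lp ℂ 2 (volume : Measure ℝ))
    (h𝓕 : ∀ f : Lp ℂ 2 (volume : Measure ℝ), Integrable (f : ℝ → ℂ) volume →
      (𝓕 f : ℝ → ℂ) =ᵐ[volume] fun p : ℝ =>
        ((1 / Real.sqrt (2 * Real.pi) : ℝ) : ℂ) *
          ∫ x : ℝ, (f : ℝ → ℂ) x * Complex.exp (-(Complex.I * (p : ℂ) * (x : ℂ))))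
    (ε : ℝ) (hε : 0 < ε)
    (Mε : Lp ℂ 2 (volume : Measure ℝ) →L[ℂ] Lp ℂ 2 (volume : Measure ℝ))
    (hMε : ∀ f : Lp ℂ 2 (volume : Measure ℝ),
      (Mε f : ℝ → ℂ) =ᵐ[volume] Set.indicator (Set.Ioo (-(ε / 2)) (ε / 2)) (f : ℝ → ℂ))
    (Fε : Lp ℂ 2 (volume : Measure ℝ) →L[ℂ] Lp ℂ 2 (volume : Measure ℝ))
    (hFε : ∀ f : Lp ℂ 2 (volume : Measure ℝ), Fε f = 𝓕.symm (Mε (𝓕 f)))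
    (hne : ⟪φ, Fε φ⟫_ℂ ≠ 0) :
    Tendsto (fun α : ℝ =>
        ((-Complex.I) * ⟪φ - Q φ + (Real.cos α : ℂ) • Q φ, Fε ((Real.sin α : ℂ) • Q φ)⟫_ℂ +
         Complex.I * ⟪(Real.sin α : ℂ) • Q φ, Fε (φ - Q φ + (Real.cos α : ℂ) • Q φ)⟫_ℂ) /
        (((2 * Real.sin α : ℝ) : ℂ) *
          (⟪φ - Q φ + (Real.cos α : ℂ) • Q φ, Fε (φ - Q φ + (Real.cos α : ℂ) • Q φ)⟫_ℂ +
           ⟪(Real.sin α : ℂ) • Q φ, Fε ((Real.sin α : ℂ) • Q φ)⟫_ℂ)))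
      (nhdsWithin 0 (Set.Ioo 0 (Real.pi / 2)))
      (nhds ((Complex.im (⟪φ, Fε (Q φ)⟫_ℂ / ⟪φ, Fε φ⟫_ℂ) : ℝ) : ℂ)) :=
  lundeen_sigma_y_weak_limit_general φ Q 𝓕 ε Mε hMε Fε hFε hne
end

section
/- (Validity of the wavefunction-reconstruction formula of Lundeen et al.) Let φ : ℝ → ℂ be a smooth, compactly supported function, and define its Fourier transform φ̂(p) = ∫_ℝ φ(x) e^{−ipx} dx. For ε > 0 define g_ε(x) = (1/2π) ∫_{−ε/2}^{ε/2} φ̂(p) e^{ipx} dp (so that g_ε = F_ε φ, the projection of φ onto momenta in J_ε = (−ε/2, ε/2)). Then for every x₀ ∈ ℝ the iterated limit lim_{ε→0⁺} (2π/ε) · lim_{δ→0⁺} (1/(2δ)) ∫_{x₀−δ}^{x₀+δ} conj(g_ε(x)) · φ(x) dx = conj(φ̂(0)) · φ(x₀). (The integral ∫_{x₀−δ}^{x₀+δ} conj(g_ε(x)) φ(x) dx equals the weakly measured quantity ⟨φ | F_ε Q_I φ⟩ with Q_I the multiplication by the indicator of the interval I = [x₀−δ, x₀+δ]; hence if φ̂(0)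 ≠ 0 the value φ(x₀) of the wavefunction is recovered, up to the constant conj(φ̂(0)), in the limit of vanishing interval and post-selection window, which is the precise content of Eq. (2)–(3) of Lundeen et al. as formulated in the paper.) -/
/-!
Both limits are symmetric difference quotients of primitives of continuous functions. The inner
one averages the continuous function `conj (g ε) * φ` over `[x₀ - δ, x₀ + δ]`, so it tends to
`conj (g ε x₀) * φ x₀`. After multiplication by `2π/ε`, the outer one becomes the conjugate of the
average of `p ↦ φ̂ p * exp (i p x₀)` over `J_ε`, which tends to `conj (φ̂ 0)`. Continuity of `φ̂` and
of `g ε` comes from dominated convergence, the exponential kernels being unimodular.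
-/

open MeasureTheory Complex Filter Topology ComplexConjugate

theorem HasDerivAt.tendsto_symmetric_slope {E : Type*} [NormedAddCommGroup E] [NormedSpace ℝ E]
    {F : ℝ → E} {F' : E} {c : ℝ} (hF : HasDerivAt F F' c) :
    Tendsto (fun δ : ℝ => (2 * δ)⁻¹ • (F (c + δ) - F (c - δ))) (𝓝[>] 0) (𝓝 F') := by
  have hneg : Tendsto Neg.neg (𝓝[>] (0 : ℝ)) (𝓝[<] 0) := by
    simpa using tendsto_neg_nhdsGT_neg (a := (0 : ℝ))
  have hleft : Tendsto (fun δ : ℝ => (-δ)⁻¹ • (F (c + -δ) - F c)) (𝓝[>] 0) (𝓝 F') :=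
    hF.tendsto_slope_zero_left.comp hneg
  have hsum := (hF.tendsto_slope_zero_right.add hleft).const_smul (2 : ℝ)⁻¹
  rw [← two_smul ℝ F', smul_smul, inv_mul_cancel₀ two_ne_zero, one_smul] at hsum
  refine hsum.congr fun δ => ?_
  simp only [inv_neg, neg_smul, ← sub_eq_add_neg, smul_sub, smul_add, smul_smul, mul_inv]
  module

theorem Continuous.tendsto_symmetric_average {E : Type*} [NormedAddCommGroup E] [NormedSpace ℝ E]
    [CompleteSpace E] {f : ℝ → E} (hf : Continuous f) (c : ℝ) :
    Tendsto (fun δ : ℝ => (2 * δ)⁻¹ • ∫ x in (c - δ)..(c + δ), f x) (𝓝[>] 0) (𝓝 (f c)) := by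
  refine ((hf.integral_hasStrictDerivAt c c).hasDerivAt.tendsto_symmetric_slope).congr
    fun δ => ?_
  rw [intervalIntegral.integral_interval_sub_left (hf.intervalIntegrable _ _)
    (hf.intervalIntegrable _ _)]

theorem Continuous.tendsto_average_centered {E : Type*} [NormedAddCommGroup E]
    [NormedSpace ℝ E] [CompleteSpace E] {f : ℝ → E} (hf : Continuous f) :
    Tendsto (fun ε : ℝ => ε⁻¹ • ∫ p in (-(ε / 2))..(ε / 2), f p) (𝓝[>] 0) (𝓝 (f 0)) := by
  have hhalf : Tendsto (fun ε : ℝ => 2⁻¹ * ε) (𝓝[>] 0) (𝓝[>] 0) :=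
    tendsto_iff_comap.mpr (comap_mulLeft_nhdsGT_zero (by norm_num)).ge
  refine ((hf.tendsto_symmetric_average 0).comp hhalf).congr fun ε => ?_
  have hlo : (0 : ℝ) - 2⁻¹ * ε = -(ε / 2) := by ring
  have hhi : (0 : ℝ) + 2⁻¹ * ε = ε / 2 := by ring
  rw [Function.comp_apply, hlo, hhi, ← mul_assoc, mul_inv_cancel₀ two_ne_zero, one_mul]

theorem continuous_integral_mul_of_norm_le_one {X α : Type*} [TopologicalSpace X]
    [FirstCountableTopology X] [TopologicalSpace α] [MeasurableSpace α] [OpensMeasurableSpace α] {μ : Measure α}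
    {h : α → ℂ} (hh : Integrable h μ) {K : X → α → ℂ} (hK : Continuous (Function.uncurry K))
    (hK_le : ∀ a t, ‖K a t‖ ≤ 1) :
    Continuous fun a => ∫ t, h t * K a t ∂μ := by
  refine continuous_of_dominated (bound := fun t => ‖h t‖)
    (fun a => hh.aestronglyMeasurable.mul
      (hK.comp (Continuous.prodMk_right a)).aestronglyMeasurable)
    (fun a => Eventually.of_forall fun t => ?_) hh.norm
    (Eventually.of_forall fun t => continuous_const.mul (hK.comp (Continuous.prodMk_left t)))
  simpa [norm_mul] using mul_le_of_le_one_right (norm_nonneg (h t)) (hK_le a t)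

/-- Validity of the wavefunction-reconstruction formula of Lundeen et al.: for a smooth
compactly supported `φ`, with `g_ε = F_εφ` the projection of `φ` onto momenta in
`J_ε = (−ε/2, ε/2)`, the iterated limit
`lim_{ε→0⁺} (2π/ε) · lim_{δ→0⁺} (1/(2δ)) ∫_{x₀−δ}^{x₀+δ} conj(g_ε(x))·φ(x) dx`
equals `conj(φ̂(0))·φ(x₀)`. -/
theorem lundeen_reconstruction_formula
    (φ : ℝ → ℂ) (hφ : ContDiff ℝ (⊤ : ℕ∞) φ) (hsupp : HasCompactSupport φ)
    (φhat : ℝ → ℂ)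
    (hφhat : φhat = fun p : ℝ => ∫ x : ℝ, φ x * Complex.exp (-(Complex.I * (p : ℂ) * (x : ℂ))))
    (g : ℝ → ℝ → ℂ)
    (hg : g = fun (ε : ℝ) (x : ℝ) => ((1 / (2 * Real.pi) : ℝ) : ℂ) *
      ∫ p in (-(ε / 2))..(ε / 2), φhat p * Complex.exp (Complex.I * (p : ℂ) * (x : ℂ)))
    (x₀ : ℝ) :
    (∀ ε : ℝ, 0 < ε →
      Tendsto (fun δ : ℝ => ((1 / (2 * δ) : ℝ) : ℂ) *
          ∫ x in (x₀ - δ)..(x₀ + δ), (starRingEnd ℂ) (g ε x) * φ x)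
        (nhdsWithin 0 (Set.Ioi 0)) (nhds ((starRingEnd ℂ) (g ε x₀) * φ x₀))) ∧
    Tendsto (fun ε : ℝ => ((2 * Real.pi / ε : ℝ) : ℂ) *
        limUnder (nhdsWithin (0 : ℝ) (Set.Ioi 0)) (fun δ : ℝ => ((1 / (2 * δ) : ℝ) : ℂ) *
          ∫ x in (x₀ - δ)..(x₀ + δ), (starRingEnd ℂ) (g ε x) * φ x))
      (nhdsWithin 0 (Set.Ioi 0)) (nhds ((starRingEnd ℂ) (φhat 0) * φ x₀)) := by
  have hφ_cont : Continuous φ := hφ.continuous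
  have hφhat_cont : Continuous φhat := hφhat ▸ continuous_integral_mul_of_norm_le_one
    (hφ_cont.integrable_of_hasCompactSupport hsupp) (by fun_prop)
    fun _ _ => by simp [Complex.norm_exp]
  have hg_cont (ε : ℝ) (hε : 0 < ε) : Continuous (g ε) := by
    simp only [hg, intervalIntegral.integral_of_le (by linarith : -(ε / 2) ≤ ε / 2)]
    exact continuous_const.mul <| continuous_integral_mul_of_norm_le_one
      hφhat_cont.integrableOn_Ioc (by fun_prop) fun _ _ => by simp [Complex.norm_exp]
  have hlocal (ε : ℝ) (hε : 0 < ε) : Tendsto (fun δ : ℝ => ((1 / (2 * δ) : ℝ) : ℂ) *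
      ∫ x in (x₀ - δ)..(x₀ + δ), conj (g ε x) * φ x) (𝓝[>] 0) (𝓝 (conj (g ε x₀) * φ x₀)) :=
    (((continuous_conj.comp (hg_cont ε hε)).mul hφ_cont).tendsto_symmetric_average x₀).congr
      fun δ => by rw [Complex.real_smul, one_div]; rfl
  refine ⟨hlocal, ?_⟩
  have hk : Continuous fun p : ℝ => φhat p * exp (I * p * x₀) := by fun_prop
  have hlow : Tendsto (fun ε : ℝ => ((2 * Real.pi / ε : ℝ) : ℂ) * g ε x₀) (𝓝[>] 0)
      (𝓝 (φhat 0)) := by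
    have := hk.tendsto_average_centered
    simp only [ofReal_zero, mul_zero, zero_mul, exp_zero, mul_one] at this
    refine this.congr fun ε => ?_
    simp only [hg, Complex.real_smul, ← mul_assoc, ← ofReal_mul]
    congr 3
    field_simp
  refine ((continuous_conj.tendsto _).comp hlow |>.mul_const (φ x₀)).congr' ?_
  filter_upwards [self_mem_nhdsWithin] with ε (hε : (0 : ℝ) < ε)
  rw [(hlocal ε hε).limUnder_eq, Function.comp_apply, map_mul, Complex.conj_ofReal, mul_assoc]
end

section
/- (The standard model measures the smeared position μ^λ ∗ P^Q — unitary picture.) Let ψ, φ ∈ L²(ℝ) be unit vectors and λ > 0. Define Ψ : ℝ² → ℂ by Ψ(y, z) = ψ(y) · φ(z − λy), which is the wavefunction after the coupling e^{−iλ Q⊗P} acts on ψ ⊗ φ. Then Ψ ∈ L²(ℝ²) with ‖Ψ‖ = 1, and for every Borel set X ⊆ ℝ, ∫_ℝ ∫_{λX} |Ψ(y, z)|² dz dy = (μ^λ ∗ ν)(X), where ν is the Borel measure on ℝ with density |ψ|², μ^λ is the Borel probability measure μ^λ(B) = ∫_{λB} |φ(z)|² dz, and ∗ denotes convolution of measures: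 (μ^λ ∗ ν)(X) = ∫_ℝ μ^λ(X − y) dν(y). That is, the probability that the rescaled pointer position z/λ lies in X equals the probability that a smeared position observable μ^λ ∗ P^Q takes a value in X in the state ψ. -/
/-!
The coupled wavefunction is `ψ ⊗ φ` pulled back along the shear `(y, z) ↦ (y, z - λy)`, which
preserves Lebesgue measure on `ℝ²`; hence `Ψ` is square integrable with `‖Ψ‖ = ‖ψ‖ ‖φ‖ = 1`.
On the fibre over `y` the shear is the translation `z ↦ z - λy`, which carries the pointer event
`{z / λ ∈ X}` onto `{z / λ + y ∈ X}`; integrating against `|ψ(y)|² dy` gives `(μ^λ ∗ ν)(X)`.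
-/

open MeasureTheory Complex

theorem MeasureTheory.MeasurePreserving.integral_comp_of_aestronglyMeasurable {α β E : Type*}
    [MeasurableSpace α] [MeasurableSpace β] [NormedAddCommGroup E] [NormedSpace ℝ E]
    {μ : Measure α} {ν : Measure β} {f : α → β} (hf : MeasurePreserving f μ ν) {g : β → E}
    (hg : AEStronglyMeasurable g ν) : ∫ x, g (f x) ∂μ = ∫ y, g y ∂ν := by
  rw [← hf.map_eq] at hg ⊢
  exact (integral_map hf.aemeasurable hg).symm

theorem MeasureTheory.setIntegral_comp_sub_right_preimage {G E : Type*} [MeasurableSpace G]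
    [AddGroup G] [MeasurableAdd G] [NormedAddCommGroup E] [NormedSpace ℝ E]
    (μ : Measure G) [μ.IsAddRightInvariant] (g : G → E) (c : G) (s : Set G) :
    ∫ x in (· - c) ⁻¹' s, g (x - c) ∂μ = ∫ x in s, g x ∂μ :=
  (measurePreserving_sub_right μ c).setIntegral_preimage_emb
    (MeasurableEquiv.subRight c).measurableEmbedding g s

theorem measurePreserving_prodMk_sub_comp_fst {α G : Type*} [MeasurableSpace α]
    [MeasurableSpace G] [AddGroup G] [MeasurableAdd G] [MeasurableSub₂ G]
    {μ : Measure α} {ν : Measure G} [SFinite μ] [SFinite ν] [ν.IsAddRightInvariant]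
    {f : α → G} (hf : Measurable f) :
    MeasurePreserving (fun p : α × G => (p.1, p.2 - f p.1)) (μ.prod ν) (μ.prod ν) :=
  (MeasurePreserving.id μ).skew_product (by fun_prop) <|
    .of_forall fun x => (measurePreserving_sub_right ν (f x)).map_eq

theorem MeasureTheory.MemLp.mul_prod_two {α β 𝕜 : Type*} [MeasurableSpace α]
    [MeasurableSpace β] [NormedRing 𝕜] [NormMulClass 𝕜] {μ : Measure α} {ν : Measure β}
    [SFinite ν] {f : α → 𝕜} {g : β → 𝕜} (hf : MemLp f 2 μ) (hg : MemLp g 2 ν) :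
    MemLp (fun p : α × β => f p.1 * g p.2) 2 (μ.prod ν) := by
  have hfg : AEStronglyMeasurable (fun p : α × β => f p.1 * g p.2) (μ.prod ν) :=
    hf.1.comp_fst.mul hg.1.comp_snd
  rw [memLp_two_iff_integrable_sq_norm hfg]
  simpa only [norm_mul, mul_pow] using
    ((memLp_two_iff_integrable_sq_norm hf.1).mp hf).mul_prod
      ((memLp_two_iff_integrable_sq_norm hg.1).mp hg)

/-- The standard model measures the smeared position `μ^λ ∗ P^Q` (unitary picture): the coupled
wavefunction `Ψ(y,z) = ψ(y)φ(z − λy)` is a unit vector of `L²(ℝ²)`, and the probability that the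
rescaled pointer `z/λ` lies in a Borel set `X` equals the convolution
`(μ^λ ∗ ν)(X) = ∫ μ^λ(X − y) dν(y)`, where `dν = |ψ|²dy` and `μ^λ(B) = ∫_{λB}|φ(z)|²dz`. -/
theorem standard_model_measures_smeared_position_unitary
    (ψ φ : ℝ → ℂ)
    (hψL2 : MemLp ψ 2 (volume : Measure ℝ)) (hψnorm : ∫ y : ℝ, ‖ψ y‖ ^ 2 = 1)
    (hφL2 : MemLp φ 2 (volume : Measure ℝ)) (hφnorm : ∫ z : ℝ, ‖φ z‖ ^ 2 = 1)
    (l : ℝ) (hl : 0 < l)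
    (Ψ : ℝ × ℝ → ℂ) (hΨ : Ψ = fun p : ℝ × ℝ => ψ p.1 * φ (p.2 - l * p.1)) :
    MemLp Ψ 2 (volume : Measure (ℝ × ℝ)) ∧
    (∫ p : ℝ × ℝ, ‖Ψ p‖ ^ 2 = 1) ∧
    ∀ X : Set ℝ, MeasurableSet X →
      (∫ y : ℝ, ∫ z in {z : ℝ | z / l ∈ X}, ‖Ψ (y, z)‖ ^ 2) =
        ∫ y : ℝ, (∫ z in {z : ℝ | z / l + y ∈ X}, ‖φ z‖ ^ 2) * ‖ψ y‖ ^ 2 := by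
  subst hΨ
  have hshear : MeasurePreserving (fun p : ℝ × ℝ => (p.1, p.2 - l * p.1)) volume volume :=
    measurePreserving_prodMk_sub_comp_fst (measurable_const_mul l)
  have hprod := hψL2.mul_prod_two hφL2
  refine ⟨hprod.comp_measurePreserving hshear, ?_, fun X _ => ?_⟩
  · calc ∫ p : ℝ × ℝ, ‖ψ p.1 * φ (p.2 - l * p.1)‖ ^ 2
        = ∫ p : ℝ × ℝ, ‖ψ p.1 * φ p.2‖ ^ 2 :=
          hshear.integral_comp_of_aestronglyMeasurable (g := fun p => ‖ψ p.1 * φ p.2‖ ^ 2)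
            (hprod.1.norm.pow 2)
      _ = (∫ y, ‖ψ y‖ ^ 2) * ∫ z, ‖φ z‖ ^ 2 := by
          simp only [norm_mul, mul_pow]
          exact integral_prod_mul (fun y => ‖ψ y‖ ^ 2) (fun z => ‖φ z‖ ^ 2)
      _ = 1 := by rw [hψnorm, hφnorm, one_mul]
  · congr 1 with y
    have hpointer : {z : ℝ | z / l ∈ X} = (· - l * y) ⁻¹' {u | u / l + y ∈ X} := by
      ext z; simp [sub_div, hl.ne']
    simp only [norm_mul, mul_pow]
    rw [integral_const_mul, hpointer,
      setIntegral_comp_sub_right_preimage volume (fun z => ‖φ z‖ ^ 2), mul_comm]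
end
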